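/- Let 2 ≤ n ≤ N−1 and assume the step ratios satisfy 0 < r_k < (3+√17)/2 for 2 ≤ k ≤ N. For 1 ≤ m ≤ n let B̃₂^{(m)} be the m×m lower bidiagonal matrix with k-th diagonal entry (1+2r_k)/(1+r_k) and k-th subdiagonal entry −r_k^{3/2}/(1+r_k) (with r_1 := 0), let B̃^{(m)} := B̃₂^{(m)} + (B̃₂^{(m)})ᵀ, and define M_r := max_{1≤m≤n} λ_max((B̃₂^{(m)})ᵀ B̃₂^{(m)}) / λ_min(B̃^{(m)})², where λ_max and λ_min denote the largest and smallest eigenvalue of a real symmetric matrix. Then for any ε > 0 and any vectors v^k, z^k, w^k ∈ ℝ² (1 ≤ k ≤ n), one has Σ_{k=1}^{n} Σ_{j=1}^{k} θ_{k−j}^{(k)} ⟨z^k, f(v^j + w^j) − f(v^j)⟩ ≤ Σ_{k=1}^{n} Σ_{j=1}^{k} θ_{k−j}^{(k)} ( ε ⟨z^k, z^j⟩ + (M_r/ε) ⟨w^k, w^j⟩ ). Consequently, Σ_{k=1}^{n} Σ_{j=1}^{k} θ_{k−j}^{(k)} ⟨z^k, f(v^j + z^j) − f(v^j)⟩ ≤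 2√(M_r) Σ_{k=1}^{n} Σ_{j=1}^{k} θ_{k−j}^{(k)} ⟨z^k, z^j⟩. -/

import Mathlib

/-!
With `D = diag(τ_1, …, τ_n)`, the matrix `B̃₂` is `D^{1/2} B D^{1/2}` for the lower bidiagonal
BDF2 matrix `B`, and it is inverted by `C = D^{-1/2} Θ D^{-1/2}`, where `Θ` is the lower triangular
matrix of DOC kernels (`Θ B = I` is their defining recursion). The DOC-weighted double sums are
then the forms `⟨x, C y⟩` of the `√τ`-weighted sequences, summed over the two components.

For step ratios below `4` the symmetric part `B̃ = B̃₂ + B̃₂ᵀ` is strictly diagonally dominant, so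
Gershgorin gives `λ := λ_min(B̃) > 0`; since `⟨u, B̃ u⟩ = 2⟨u, B̃₂ u⟩`, this yields
`λ |Cᵀx|² ≤ 2⟨x, C x⟩` and `λ |C x|² ≤ 2⟨x, C x⟩`. Writing `⟨z, C y⟩ = ⟨Cᵀz, y⟩`, Young's
inequality gives `⟨z, C y⟩ ≤ ε⟨z, C z⟩ + |y|²/(2ελ)`; as `f` is `1`-Lipschitz, `|y|² ≤ |w|²` for
`y = f(v + w) − f(v)`, and `|w|² = |B̃₂ C w|² ≤ λ_max(B̃₂ᵀB̃₂) |C w|² ≤ (2λ_max/λ) ⟨w, C w⟩`.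
The second estimate is the first one with `w = z` and `ε = √M_r`.
-/


open Finset Matrix

/-- BDF2 kernels `b_j^{(n)}` (assuming `r 1 = 0`, so the `n = 1` case
`b_0^{(1)} = 1/τ_1` is subsumed by the general formula). -/
noncomputable def bk (τ r : ℕ → ℝ) (n j : ℕ) : ℝ :=
  if j = 0 then (1 + 2 * r n) / (τ n * (1 + r n))
  else if j = 1 then -(r n) ^ 2 / (τ n * (1 + r n))
  else 0

/-- DOC kernels: `th τ r n m = θ_m^{(n)}`, i.e. `θ_{n-k}^{(n)}` with `m = n - k`. -/
noncomputable def th (τ r : ℕ → ℝ) (n : ℕ) : ℕ → ℝ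
  | 0 => 1 / bk τ r n 0
  | m + 1 => -(1 / bk τ r (n - (m + 1)) 0) *
      ∑ i ∈ (Finset.range (m + 1)).attach,
        th τ r n i.1 * bk τ r (n - i.1) (m + 1 - i.1)
  decreasing_by exact Finset.mem_range.mp i.2

/-- The `m × m` lower bidiagonal matrix `B̃₂^{(m)}` with `k`-th diagonal entry
`(1+2r_k)/(1+r_k)` and `k`-th subdiagonal entry `−r_k^{3/2}/(1+r_k)`. -/
noncomputable def Bt2 (r : ℕ → ℝ) (m : ℕ) : Matrix (Fin m) (Fin m) ℝ :=
  Matrix.of fun k j =>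
    if (k : ℕ) = (j : ℕ) then
      (1 + 2 * r ((k : ℕ) + 1)) / (1 + r ((k : ℕ) + 1))
    else if (j : ℕ) + 1 = (k : ℕ) then
      -(r ((k : ℕ) + 1) * Real.sqrt (r ((k : ℕ) + 1))) / (1 + r ((k : ℕ) + 1))
    else 0

/-- Largest eigenvalue of a real symmetric matrix (junk value `0` otherwise). -/
noncomputable def lamMax {m : ℕ} (A : Matrix (Fin m) (Fin m) ℝ) : ℝ :=
  if h : A.IsHermitian then ⨆ i, h.eigenvalues i else 0

/-- Smallest eigenvalue of a real symmetric matrix (junk value `0` otherwise). -/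
noncomputable def lamMin {m : ℕ} (A : Matrix (Fin m) (Fin m) ℝ) : ℝ :=
  if h : A.IsHermitian then ⨅ i, h.eigenvalues i else 0

/-- The quantity `λ_max((B̃₂^{(m)})ᵀ B̃₂^{(m)}) / λ_min(B̃^{(m)})²`. -/
noncomputable def Mrq (r : ℕ → ℝ) (m : ℕ) : ℝ :=
  lamMax ((Bt2 r m)ᵀ * Bt2 r m) / (lamMin (Bt2 r m + (Bt2 r m)ᵀ)) ^ 2

/-- The nonlinear force vector `f(u) := u/(1+|u|²)` for `u ∈ ℝ²`. -/
noncomputable def fvec (u : Fin 2 → ℝ) : Fin 2 → ℝ :=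
  fun i => u i / (1 + ∑ j, (u j) ^ 2)


-- With `α = |a|²`, `β = |b|²`, `p = ⟨a, b⟩` this reads
-- `|(1 + β) a - (1 + α) b|² ≤ |a - b|² (1 + α)² (1 + β)²`, i.e. `|f a - f b| ≤ |a - b|`.
theorem gram_le_of_sq_le_mul {α β p : ℝ} (hα : 0 ≤ α) (hβ : 0 ≤ β) (hp : p ^ 2 ≤ α * β) :
    α * (1 + β) ^ 2 - 2 * p * ((1 + α) * (1 + β)) + β * (1 + α) ^ 2 ≤
      (α + β - 2 * p) * ((1 + α) ^ 2 * (1 + β) ^ 2) := by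
  rcases (add_nonneg hα hβ).eq_or_lt with hs | hs
  · obtain rfl : α = 0 := by linarith
    obtain rfl : β = 0 := by linarith
    obtain rfl : p = 0 := by nlinarith
    norm_num
  · rw [← sub_nonneg]
    refine nonneg_of_mul_nonneg_right ?_ hs
    have hsos : (α + β) * ((α + β - 2 * p) * ((1 + α) ^ 2 * (1 + β) ^ 2) -
          (α * (1 + β) ^ 2 - 2 * p * ((1 + α) * (1 + β)) + β * (1 + α) ^ 2)) =
        (α - β) ^ 2 * ((α * β + (α * β) ^ 2 + 3 * (α + β) + 2 * (α + β) * (α * β) +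
            (α + β) ^ 2) / 2) +
          2 * ((1 + (α + β) + α * β) * ((α + β) + α * β)) * (α * β - p ^ 2) +
          2 * ((1 + (α + β) + α * β) * ((α + β) + α * β)) * (p - (α + β) / 2) ^ 2 := by
      ring
    rw [hsos]
    have : 0 ≤ α * β - p ^ 2 := by linarith
    positivity

theorem fvec_sub_sq_le (a b : Fin 2 → ℝ) :
    ∑ i, (fvec a i - fvec b i) ^ 2 ≤ ∑ i, (a i - b i) ^ 2 := by
  have key := gram_le_of_sq_le_mul (add_nonneg (sq_nonneg (a 0)) (sq_nonneg (a 1)))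
    (add_nonneg (sq_nonneg (b 0)) (sq_nonneg (b 1)))
    (show (a 0 * b 0 + a 1 * b 1) ^ 2 ≤ (a 0 ^ 2 + a 1 ^ 2) * (b 0 ^ 2 + b 1 ^ 2) by
      nlinarith [sq_nonneg (a 0 * b 1 - a 1 * b 0)])
  simp only [fvec, Fin.sum_univ_two]
  rw [div_sub_div _ _ (by positivity) (by positivity),
    div_sub_div _ _ (by positivity) (by positivity),
    div_pow, div_pow, ← add_div, div_le_iff₀ (by positivity)]
  linear_combination key

namespace Matrix.IsHermitian

section Eigenvalues

open scoped MatrixOrder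

variable {ι : Type*} [Fintype ι] [DecidableEq ι] {A : Matrix ι ι ℝ}

theorem mul_dotProduct_self_le_of_le_eigenvalues (hA : A.IsHermitian) {c : ℝ}
    (hc : ∀ i, c ≤ hA.eigenvalues i) (x : ι → ℝ) : c * (x ⬝ᵥ x) ≤ x ⬝ᵥ (A *ᵥ x) := by
  have hle : algebraMap ℝ (Matrix ι ι ℝ) c ≤ A := by
    rw [algebraMap_le_iff_le_spectrum (ha := hA.isSelfAdjoint),
      hA.spectrum_real_eq_range_eigenvalues]
    rintro _ ⟨i, rfl⟩
    exact hc i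
  have := (Matrix.le_iff.mp hle).dotProduct_mulVec_nonneg x
  simpa [Algebra.algebraMap_eq_smul_one, sub_mulVec, dotProduct_sub, smul_mulVec,
    dotProduct_smul] using this

theorem dotProduct_mulVec_le_mul_of_eigenvalues_le (hA : A.IsHermitian) {c : ℝ}
    (hc : ∀ i, hA.eigenvalues i ≤ c) (x : ι → ℝ) : x ⬝ᵥ (A *ᵥ x) ≤ c * (x ⬝ᵥ x) := by
  have hle : A ≤ algebraMap ℝ (Matrix ι ι ℝ) c := by
    rw [le_algebraMap_iff_spectrum_le (ha := hA.isSelfAdjoint),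
      hA.spectrum_real_eq_range_eigenvalues]
    rintro _ ⟨i, rfl⟩
    exact hc i
  have := (Matrix.le_iff.mp hle).dotProduct_mulVec_nonneg x
  simpa [Algebra.algebraMap_eq_smul_one, sub_mulVec, dotProduct_sub, smul_mulVec,
    dotProduct_smul] using this

theorem eigenvalues_pos_of_diag_dominant (hA : A.IsHermitian)
    (hdom : ∀ k, ∑ j ∈ Finset.univ.erase k, |A k j| < A k k) (i : ι) : 0 < hA.eigenvalues i := by
  have hμ : Module.End.HasEigenvalue (Matrix.toLin' A) (hA.eigenvalues i) := by
    rw [Module.End.hasEigenvalue_iff_mem_spectrum, Matrix.spectrum_toLin']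
    exact hA.eigenvalues_mem_spectrum_real i
  obtain ⟨k, hk⟩ := eigenvalue_mem_ball hμ
  rw [Metric.mem_closedBall, Real.dist_eq] at hk
  simp only [Real.norm_eq_abs] at hk
  linarith [hdom k, neg_abs_le (hA.eigenvalues i - A k k)]

end Eigenvalues

variable {n : ℕ} {A : Matrix (Fin n) (Fin n) ℝ}

theorem lamMin_mul_dotProduct_self_le (hA : A.IsHermitian) (x : Fin n → ℝ) :
    lamMin A * (x ⬝ᵥ x) ≤ x ⬝ᵥ (A *ᵥ x) := by
  refine hA.mul_dotProduct_self_le_of_le_eigenvalues (fun i => ?_) x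
  rw [lamMin, dif_pos hA]
  exact ciInf_le (Set.finite_range _).bddBelow i

theorem dotProduct_mulVec_le_lamMax_mul (hA : A.IsHermitian) (x : Fin n → ℝ) :
    x ⬝ᵥ (A *ᵥ x) ≤ lamMax A * (x ⬝ᵥ x) := by
  refine hA.dotProduct_mulVec_le_mul_of_eigenvalues_le (fun i => ?_) x
  rw [lamMax, dif_pos hA]
  exact le_ciSup (Set.finite_range _).bddAbove i

theorem lamMin_pos_of_diag_dominant [NeZero n] (hA : A.IsHermitian)
    (hdom : ∀ k, ∑ j ∈ Finset.univ.erase k, |A k j| < A k k) : 0 < lamMin A := by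
  rw [lamMin, dif_pos hA]
  obtain ⟨i, hi⟩ := exists_eq_ciInf_of_finite (f := hA.eigenvalues)
  exact hi ▸ hA.eigenvalues_pos_of_diag_dominant hdom i

end Matrix.IsHermitian

section DotProduct

variable {ι : Type*} [Fintype ι]

theorem two_mul_dotProduct_le {a : ℝ} (ha : 0 < a) (t y : ι → ℝ) :
    2 * (t ⬝ᵥ y) ≤ a * (t ⬝ᵥ t) + (y ⬝ᵥ y) / a := by
  have hk (k : ι) : 2 * (t k * y k) ≤ a * (t k * t k) + y k * y k / a := by
    rw [← sub_nonneg]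
    have : 0 ≤ (a * t k - y k) ^ 2 / a := by positivity
    convert this using 1
    field_simp
    ring
  simp only [dotProduct, Finset.mul_sum, Finset.sum_div, ← Finset.sum_add_distrib]
  exact Finset.sum_le_sum fun k _ => hk k

theorem dotProduct_add_transpose_mulVec (A : Matrix ι ι ℝ) (u : ι → ℝ) :
    u ⬝ᵥ ((A + Aᵀ) *ᵥ u) = 2 * (u ⬝ᵥ (A *ᵥ u)) := by
  rw [add_mulVec, dotProduct_add, mulVec_transpose, dotProduct_comm u (u ᵥ* A),
    ← dotProduct_mulVec]
  ring

theorem isHermitian_transpose_mul_self (A : Matrix ι ι ℝ) : (Aᵀ * A).IsHermitian := by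
  simpa using isHermitian_conjTranspose_mul_self A

end DotProduct

theorem isHermitian_add_transpose {ι : Type*} (A : Matrix ι ι ℝ) : (A + Aᵀ).IsHermitian := by
  simpa using isHermitian_add_transpose_self A

section InversePair

variable {n : ℕ}

theorem lamMax_transpose_mul_self_nonneg (A : Matrix (Fin n) (Fin n) ℝ) :
    0 ≤ lamMax (Aᵀ * A) := by
  have hPSD : (Aᵀ * A).PosSemidef := by simpa using posSemidef_conjTranspose_mul_self A
  rw [lamMax, dif_pos hPSD.isHermitian]
  exact Real.iSup_nonneg hPSD.eigenvalues_nonneg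

variable {A C : Matrix (Fin n) (Fin n) ℝ}

theorem dotProduct_self_eq_of_mul_eq_one (hAC : A * C = 1) (y : Fin n → ℝ) :
    y ⬝ᵥ y = (C *ᵥ y) ⬝ᵥ ((Aᵀ * A) *ᵥ (C *ᵥ y)) := by
  rw [← mulVec_mulVec, mulVec_transpose, dotProduct_comm (C *ᵥ y), ← dotProduct_mulVec,
    mulVec_mulVec, hAC, one_mulVec]

theorem lamMin_mul_dotProduct_mulVec_self_le (hCA : C * A = 1) (x : Fin n → ℝ) :
    lamMin (A + Aᵀ) * ((C *ᵥ x) ⬝ᵥ (C *ᵥ x)) ≤ 2 * (x ⬝ᵥ (C *ᵥ x)) := by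
  have hAC : A * C = 1 := mul_eq_one_comm.mp hCA
  calc _ ≤ (C *ᵥ x) ⬝ᵥ ((A + Aᵀ) *ᵥ (C *ᵥ x)) :=
        (isHermitian_add_transpose A).lamMin_mul_dotProduct_self_le _
    _ = 2 * (x ⬝ᵥ (C *ᵥ x)) := by
        rw [dotProduct_add_transpose_mulVec, mulVec_mulVec, hAC, one_mulVec, dotProduct_comm]

theorem lamMin_mul_dotProduct_transpose_mulVec_self_le (hCA : C * A = 1) (x : Fin n → ℝ) :
    lamMin (A + Aᵀ) * ((Cᵀ *ᵥ x) ⬝ᵥ (Cᵀ *ᵥ x)) ≤ 2 * (x ⬝ᵥ (C *ᵥ x)) := by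
  calc _ ≤ (Cᵀ *ᵥ x) ⬝ᵥ ((A + Aᵀ) *ᵥ (Cᵀ *ᵥ x)) :=
        (isHermitian_add_transpose A).lamMin_mul_dotProduct_self_le _
    _ = 2 * (x ⬝ᵥ (C *ᵥ x)) := by
        rw [dotProduct_add_transpose_mulVec, mulVec_transpose, ← dotProduct_mulVec,
          mulVec_mulVec, hCA, one_mulVec, dotProduct_comm, ← dotProduct_mulVec]

theorem dotProduct_mulVec_le_of_mul_eq_one (hCA : C * A = 1) (hl : 0 < lamMin (A + Aᵀ))
    {ε : ℝ} (hε : 0 < ε) (x y : Fin n → ℝ) :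
    x ⬝ᵥ (C *ᵥ y) ≤ ε * (x ⬝ᵥ (C *ᵥ x)) + (y ⬝ᵥ y) / (2 * ε * lamMin (A + Aᵀ)) := by
  set t := Cᵀ *ᵥ x
  have hxt : x ⬝ᵥ (C *ᵥ y) = t ⬝ᵥ y := by rw [dotProduct_mulVec, ← mulVec_transpose]
  have hyoung := two_mul_dotProduct_le (mul_pos hε hl) t y
  have ht := mul_le_mul_of_nonneg_left
    (lamMin_mul_dotProduct_transpose_mulVec_self_le hCA x) hε.le
  have hsplit : (y ⬝ᵥ y) / (2 * ε * lamMin (A + Aᵀ)) = (y ⬝ᵥ y) / (ε * lamMin (A + Aᵀ)) / 2 := by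
    field_simp
  rw [hxt, hsplit]
  nlinarith

theorem dotProduct_self_le_of_mul_eq_one (hCA : C * A = 1) (hl : 0 < lamMin (A + Aᵀ))
    (y : Fin n → ℝ) :
    y ⬝ᵥ y ≤ 2 * lamMax (Aᵀ * A) / lamMin (A + Aᵀ) * (y ⬝ᵥ (C *ᵥ y)) := by
  have hAC : A * C = 1 := mul_eq_one_comm.mp hCA
  have hCy : (C *ᵥ y) ⬝ᵥ (C *ᵥ y) ≤ 2 / lamMin (A + Aᵀ) * (y ⬝ᵥ (C *ᵥ y)) := by
    rw [div_mul_eq_mul_div, le_div_iff₀ hl, mul_comm]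
    exact lamMin_mul_dotProduct_mulVec_self_le hCA y
  calc y ⬝ᵥ y = (C *ᵥ y) ⬝ᵥ ((Aᵀ * A) *ᵥ (C *ᵥ y)) := dotProduct_self_eq_of_mul_eq_one hAC y
    _ ≤ lamMax (Aᵀ * A) * ((C *ᵥ y) ⬝ᵥ (C *ᵥ y)) :=
        (isHermitian_transpose_mul_self A).dotProduct_mulVec_le_lamMax_mul _
    _ ≤ lamMax (Aᵀ * A) * (2 / lamMin (A + Aᵀ) * (y ⬝ᵥ (C *ᵥ y))) :=
        mul_le_mul_of_nonneg_left hCy (lamMax_transpose_mul_self_nonneg A)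
    _ = 2 * lamMax (Aᵀ * A) / lamMin (A + Aᵀ) * (y ⬝ᵥ (C *ᵥ y)) := by ring

theorem lamMax_transpose_mul_self_pos [NeZero n] (hCA : C * A = 1) : 0 < lamMax (Aᵀ * A) := by
  have hAC : A * C = 1 := mul_eq_one_comm.mp hCA
  set x : Fin n → ℝ := Pi.single 0 1
  have hx : x ⬝ᵥ x = 1 := by simp [x]
  have hle : x ⬝ᵥ x ≤ lamMax (Aᵀ * A) * ((C *ᵥ x) ⬝ᵥ (C *ᵥ x)) := by
    calc x ⬝ᵥ x = (C *ᵥ x) ⬝ᵥ ((Aᵀ * A) *ᵥ (C *ᵥ x)) := dotProduct_self_eq_of_mul_eq_one hAC x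
      _ ≤ _ := (isHermitian_transpose_mul_self A).dotProduct_mulVec_le_lamMax_mul _
  have hCx : 0 ≤ (C *ᵥ x) ⬝ᵥ (C *ᵥ x) := Finset.sum_nonneg fun i _ => mul_self_nonneg _
  by_contra! h
  nlinarith [mul_nonpos_of_nonpos_of_nonneg h hCx]

theorem sum_dotProduct_mulVec_le_of_mul_eq_one {ι : Type*} [Fintype ι] (hCA : C * A = 1)
    (hl : 0 < lamMin (A + Aᵀ)) {ε M : ℝ} (hε : 0 < ε)
    (hM : lamMax (Aᵀ * A) / lamMin (A + Aᵀ) ^ 2 ≤ M) (x y w : ι → Fin n → ℝ)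
    (hyw : ∑ i, y i ⬝ᵥ y i ≤ ∑ i, w i ⬝ᵥ w i) :
    ∑ i, x i ⬝ᵥ (C *ᵥ y i) ≤
      ε * ∑ i, x i ⬝ᵥ (C *ᵥ x i) + M / ε * ∑ i, w i ⬝ᵥ (C *ᵥ w i) := by
  set l := lamMin (A + Aᵀ)
  have hQw : 0 ≤ ∑ i, w i ⬝ᵥ (C *ᵥ w i) := Finset.sum_nonneg fun i _ => by
    have := lamMin_mul_dotProduct_mulVec_self_le hCA (w i)
    have : 0 ≤ (C *ᵥ w i) ⬝ᵥ (C *ᵥ w i) := Finset.sum_nonneg fun i _ => mul_self_nonneg _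
    nlinarith
  have hc : 0 < 2 * ε * l := by positivity
  calc ∑ i, x i ⬝ᵥ (C *ᵥ y i)
      ≤ ∑ i, (ε * (x i ⬝ᵥ (C *ᵥ x i)) + (y i ⬝ᵥ y i) / (2 * ε * l)) :=
        Finset.sum_le_sum fun i _ => dotProduct_mulVec_le_of_mul_eq_one hCA hl hε (x i) (y i)
    _ = ε * ∑ i, x i ⬝ᵥ (C *ᵥ x i) + (∑ i, y i ⬝ᵥ y i) / (2 * ε * l) := by
        rw [Finset.sum_add_distrib, Finset.mul_sum, Finset.sum_div]
    _ ≤ ε * ∑ i, x i ⬝ᵥ (C *ᵥ x i) + (∑ i, w i ⬝ᵥ w i) / (2 * ε * l) := by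
        gcongr
    _ ≤ ε * ∑ i, x i ⬝ᵥ (C *ᵥ x i) +
          (∑ i, 2 * lamMax (Aᵀ * A) / l * (w i ⬝ᵥ (C *ᵥ w i))) / (2 * ε * l) := by
        gcongr with i
        exact dotProduct_self_le_of_mul_eq_one hCA hl (w i)
    _ = ε * ∑ i, x i ⬝ᵥ (C *ᵥ x i) + lamMax (Aᵀ * A) / l ^ 2 / ε * ∑ i, w i ⬝ᵥ (C *ᵥ w i) := by
        rw [← Finset.mul_sum]
        field_simp
    _ ≤ ε * ∑ i, x i ⬝ᵥ (C *ᵥ x i) + M / ε * ∑ i, w i ⬝ᵥ (C *ᵥ w i) := by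
        gcongr

end InversePair

theorem th_zero (τ r : ℕ → ℝ) (n : ℕ) : th τ r n 0 = 1 / bk τ r n 0 := by
  rw [th]

theorem th_succ (τ r : ℕ → ℝ) (n m : ℕ) :
    th τ r n (m + 1) = -(1 / bk τ r (n - (m + 1)) 0) * (th τ r n m * bk τ r (n - m) 1) := by
  rw [th, Finset.sum_attach (range (m + 1)) fun i => th τ r n i * bk τ r (n - i) (m + 1 - i),
    Finset.sum_eq_single_of_mem m (by simp)]
  · simp
  · intro i hi him
    have : m + 1 - i ≠ 0 ∧ m + 1 - i ≠ 1 := by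
      have := Finset.mem_range.mp hi
      omega
    simp [bk, this]

-- Entry `(k, j)` of `D^{-1/2} Θ D^{-1/2}`, with indices shifted down by one: row `k` is
-- the time level `k + 1`.
noncomputable def docEntry (τ r : ℕ → ℝ) (k j : ℕ) : ℝ :=
  if j ≤ k then th τ r (k + 1) (k - j) / (√(τ (k + 1)) * √(τ (j + 1))) else 0

noncomputable def docMatrix (τ r : ℕ → ℝ) (n : ℕ) : Matrix (Fin n) (Fin n) ℝ :=
  Matrix.of fun k j => docEntry τ r k j

theorem docMatrix_mul_Bt2_apply (τ r : ℕ → ℝ) {n : ℕ} (k j : Fin n) :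
    (docMatrix τ r n * Bt2 r n) k j =
      docEntry τ r k j * ((1 + 2 * r (j + 1)) / (1 + r (j + 1))) +
        docEntry τ r k (j + 1) * (-(r (j + 2) * √(r (j + 2))) / (1 + r (j + 2))) := by
  let G : ℕ → ℝ := fun l => docEntry τ r k l *
    if l = j then (1 + 2 * r (l + 1)) / (1 + r (l + 1))
    else if j + 1 = l then -(r (l + 1) * √(r (l + 1))) / (1 + r (l + 1)) else 0
  have hG : ∀ l, G l = (if l = j then docEntry τ r k j * ((1 + 2 * r (j + 1)) / (1 + r (j + 1)))
      else 0) + (if l = j + 1 then docEntry τ r k (j + 1) *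
        (-(r (j + 2) * √(r (j + 2))) / (1 + r (j + 2))) else 0) := by
    intro l
    by_cases h₁ : l = j
    · subst h₁; simp [G]
    · by_cases h₂ : l = j + 1
      · subst h₂; simp [G]
      · simp [G, h₁, h₂, Ne.symm h₂]
  have hsum : (docMatrix τ r n * Bt2 r n) k j = ∑ l ∈ range n, G l :=
    (Fin.sum_univ_eq_sum_range G n)
  rw [hsum, Finset.sum_congr rfl fun l _ => hG l, Finset.sum_add_distrib, Finset.sum_ite_eq',
    Finset.sum_ite_eq', if_pos (Finset.mem_range.mpr j.2)]
  split_ifs with h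
  · rfl
  · have : ¬ (j + 1 ≤ (k : ℕ)) := by
      have := Finset.mem_range.not.mp h
      omega
    simp [docEntry, this]

theorem docEntry_mul_add_docEntry_mul {τ r : ℕ → ℝ} {n : ℕ}
    (hτ : ∀ k, 1 ≤ k → k ≤ n → 0 < τ k) (hr0 : ∀ k, 1 ≤ k → k ≤ n → 0 ≤ r k)
    (hr : ∀ k, 2 ≤ k → k ≤ n → r k = τ k / τ (k - 1)) {k j : ℕ} (hk : k < n) (hj : j < n) :
    docEntry τ r k j * ((1 + 2 * r (j + 1)) / (1 + r (j + 1))) +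
        docEntry τ r k (j + 1) * (-(r (j + 2) * √(r (j + 2))) / (1 + r (j + 2))) =
      if k = j then 1 else 0 := by
  have hτj := hτ (j + 1) (by omega) (by omega)
  have hrj := hr0 (j + 1) (by omega) (by omega)
  rcases lt_trichotomy k j with hkj | rfl | hjk
  · simp [docEntry, show ¬ j ≤ k by omega, show ¬ j + 1 ≤ k by omega, hkj.ne]
  · simp only [docEntry, le_refl, if_true, show ¬ k + 1 ≤ k by omega, if_false, Nat.sub_self,
      th_zero, bk, zero_mul, add_zero]
    rw [Real.mul_self_sqrt hτj.le]
    field_simp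
  · have hr2 : r (j + 2) = τ (j + 2) / τ (j + 1) := hr (j + 2) (by omega) (by omega)
    have hr2pos : 0 < r (j + 2) := hr2 ▸ div_pos (hτ (j + 2) (by omega) (by omega)) hτj
    have hτ2 : τ (j + 2) = r (j + 2) * τ (j + 1) := by rw [hr2, div_mul_cancel₀ _ hτj.ne']
    have hrec : th τ r (k + 1) (k - j) = -(1 / bk τ r (j + 1) 0) *
        (th τ r (k + 1) (k - (j + 1)) * bk τ r (j + 2) 1) := by
      rw [show k - j = k - (j + 1) + 1 by omega, th_succ,
        show k + 1 - (k - (j + 1) + 1) = j + 1 by omega,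
        show k + 1 - (k - (j + 1)) = j + 2 by omega]
    simp only [docEntry, show j ≤ k by omega, show j + 1 ≤ k by omega, if_true, hjk.ne',
      if_false, hrec, bk, one_ne_zero]
    rw [hτ2, Real.sqrt_mul hr2pos.le]
    have : 0 < √(r (j + 2)) := Real.sqrt_pos.mpr hr2pos
    have : 0 < √(τ (j + 1)) := Real.sqrt_pos.mpr hτj
    field_simp
    ring

theorem docMatrix_mul_Bt2 {τ r : ℕ → ℝ} {n : ℕ}
    (hτ : ∀ k, 1 ≤ k → k ≤ n → 0 < τ k) (hr0 : ∀ k, 1 ≤ k → k ≤ n → 0 ≤ r k)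
    (hr : ∀ k, 2 ≤ k → k ≤ n → r k = τ k / τ (k - 1)) :
    docMatrix τ r n * Bt2 r n = 1 := by
  ext k j
  rw [docMatrix_mul_Bt2_apply, docEntry_mul_add_docEntry_mul hτ hr0 hr k.2 j.2, one_apply]
  simp [Fin.ext_iff]

theorem sum_le_of_le_ite {n m : ℕ} {s : Finset (Fin n)} {f : Fin n → ℝ} {c : ℝ} (hc : 0 ≤ c)
    (hf : ∀ j ∈ s, f j ≤ if (j : ℕ) = m then c else 0) : ∑ j ∈ s, f j ≤ c :=
  calc ∑ j ∈ s, f j ≤ ∑ j ∈ s, if (j : ℕ) = m then c else 0 := Finset.sum_le_sum hf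
    _ ≤ ∑ j : Fin n, if (j : ℕ) = m then c else 0 :=
        Finset.sum_le_sum_of_subset_of_nonneg (Finset.subset_univ s) fun _ _ _ => by
          split_ifs <;> simp [hc]
    _ ≤ c := by
        rw [Fin.sum_univ_eq_sum_range (fun j => if j = m then c else 0), Finset.sum_ite_eq']
        split_ifs <;> simp [hc]

theorem mul_sqrt_div_add_mul_sqrt_div_lt {R R' : ℝ} (hR : 0 ≤ R) (hR4 : R < 4) (hR' : 0 ≤ R')
    (hR'4 : R' < 4) : R * √R / (1 + R) + R' * √R' / (1 + R') < 2 * ((1 + 2 * R) / (1 + R)) := by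
  have hs : √R ≤ 2 := Real.sqrt_le_iff.mpr ⟨by norm_num, by norm_num; linarith⟩
  have hs' : √R' ≤ 2 := Real.sqrt_le_iff.mpr ⟨by norm_num, by norm_num; linarith⟩
  have h1 : R * √R / (1 + R) ≤ 2 * R / (1 + R) :=
    div_le_div_of_nonneg_right (by nlinarith) (by linarith)
  have h2 : R' * √R' / (1 + R') < 2 := by
    rw [div_lt_iff₀ (by linarith)]
    nlinarith [Real.sqrt_nonneg R']
  have h3 : 2 * R / (1 + R) + 2 = 2 * ((1 + 2 * R) / (1 + R)) := by
    field_simp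
    ring
  linarith

theorem Bt2_add_transpose_diag_dominant {r : ℕ → ℝ} {n : ℕ}
    (hr4 : ∀ k, 1 ≤ k → k ≤ n + 1 → 0 ≤ r k ∧ r k < 4) (k : Fin n) :
    ∑ j ∈ univ.erase k, |(Bt2 r n + (Bt2 r n)ᵀ) k j| < (Bt2 r n + (Bt2 r n)ᵀ) k k := by
  obtain ⟨hR, hR4⟩ := hr4 (k + 1) (by omega) (by omega)
  obtain ⟨hR', hR'4⟩ := hr4 (k + 2) (by omega) (by omega)
  have hrow : ∑ j ∈ univ.erase k, |Bt2 r n k j| ≤ r (k + 1) * √(r (k + 1)) / (1 + r (k + 1)) :=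
    sum_le_of_le_ite (m := k - 1) (by positivity) fun j hj => by
      have hjk : (k : ℕ) ≠ j := fun h => (Finset.mem_erase.mp hj).1 (Fin.ext h).symm
      by_cases h : (j : ℕ) + 1 = k
      · have hv : Bt2 r n k j = -(r (k + 1) * √(r (k + 1))) / (1 + r (k + 1)) := by
          simp [Bt2, hjk, h]
        rw [hv, if_pos (by omega), neg_div, abs_neg, abs_of_nonneg (by positivity)]
      · have hv : Bt2 r n k j = 0 := by simp [Bt2, hjk, h]
        rw [hv, abs_zero]
        split_ifs <;> positivity
  have hcol : ∑ j ∈ univ.erase k, |Bt2 r n j k| ≤ r (k + 2) * √(r (k + 2)) / (1 + r (k + 2)) :=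
    sum_le_of_le_ite (m := k + 1) (by positivity) fun j hj => by
      have hjk : (j : ℕ) ≠ k := fun h => (Finset.mem_erase.mp hj).1 (Fin.ext h)
      by_cases h : (k : ℕ) + 1 = j
      · have hv : Bt2 r n j k = -(r (j + 1) * √(r (j + 1))) / (1 + r (j + 1)) := by
          simp [Bt2, hjk, h]
        rw [hv, if_pos h.symm, ← h, neg_div, abs_neg, abs_of_nonneg (by positivity)]
      · have hv : Bt2 r n j k = 0 := by simp [Bt2, hjk, h]
        rw [hv, abs_zero]
        split_ifs <;> positivity
  calc ∑ j ∈ univ.erase k, |(Bt2 r n + (Bt2 r n)ᵀ) k j|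
      ≤ ∑ j ∈ univ.erase k, (|Bt2 r n k j| + |Bt2 r n j k|) :=
        Finset.sum_le_sum fun j _ => abs_add_le _ _
    _ < 2 * ((1 + 2 * r (k + 1)) / (1 + r (k + 1))) := by
        rw [Finset.sum_add_distrib]
        linarith [mul_sqrt_div_add_mul_sqrt_div_lt hR hR4 hR' hR'4]
    _ = (Bt2 r n + (Bt2 r n)ᵀ) k k := by simp [Bt2]; ring

theorem sum_Icc_one_eq_sum_range {M : Type*} [AddCommMonoid M] (f : ℕ → M) (n : ℕ) :
    ∑ k ∈ Icc 1 n, f k = ∑ k ∈ range n, f (k + 1) := by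
  rw [← Finset.Ico_add_one_right_eq_Icc, Finset.sum_Ico_eq_sum_range, Nat.add_sub_cancel]
  simp only [add_comm 1]

theorem sum_range_ite_le {M : Type*} [AddCommMonoid M] (g : ℕ → M) {k n : ℕ} (hk : k < n) :
    ∑ l ∈ range n, (if l ≤ k then g l else 0) = ∑ l ∈ range (k + 1), g l := by
  rw [← Finset.sum_filter]
  congr 1
  ext l
  simp only [Finset.mem_filter, Finset.mem_range]
  omega

noncomputable def scaledSeq {ι : Type*} (τ : ℕ → ℝ) (n : ℕ) (a : ℕ → ι → ℝ) (i : ι) :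
    Fin n → ℝ :=
  fun k => √(τ (k + 1)) * a (k + 1) i

theorem sum_th_mul_eq_sum_dotProduct {ι : Type*} [Fintype ι] {τ : ℕ → ℝ} (r : ℕ → ℝ) {n : ℕ}
    (hτ : ∀ k, 1 ≤ k → k ≤ n → 0 < τ k) (a b : ℕ → ι → ℝ) :
    ∑ k ∈ Icc 1 n, ∑ j ∈ Icc 1 k, th τ r k (k - j) * ∑ i, a k i * b j i =
      ∑ i, scaledSeq τ n a i ⬝ᵥ (docMatrix τ r n *ᵥ scaledSeq τ n b i) := by
  have hterm : ∀ k l : ℕ, k < n → l < n → ∀ i, √(τ (k + 1)) * a (k + 1) i *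
      (docEntry τ r k l * (√(τ (l + 1)) * b (l + 1) i)) =
      if l ≤ k then th τ r (k + 1) (k - l) * (a (k + 1) i * b (l + 1) i) else 0 := by
    intro k l hk hl i
    have : 0 < √(τ (k + 1)) := Real.sqrt_pos.mpr (hτ _ (by omega) (by omega))
    have : 0 < √(τ (l + 1)) := Real.sqrt_pos.mpr (hτ _ (by omega) (by omega))
    unfold docEntry
    split_ifs
    · field_simp
    · simp
  calc ∑ k ∈ Icc 1 n, ∑ j ∈ Icc 1 k, th τ r k (k - j) * ∑ i, a k i * b j i
      = ∑ k ∈ range n, ∑ l ∈ range n,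
          if l ≤ k then th τ r (k + 1) (k - l) * ∑ i, a (k + 1) i * b (l + 1) i else 0 := by
        rw [sum_Icc_one_eq_sum_range]
        refine Finset.sum_congr rfl fun k hk => ?_
        rw [sum_Icc_one_eq_sum_range, sum_range_ite_le _ (Finset.mem_range.mp hk)]
        simp
    _ = ∑ k ∈ range n, ∑ l ∈ range n, ∑ i, √(τ (k + 1)) * a (k + 1) i *
          (docEntry τ r k l * (√(τ (l + 1)) * b (l + 1) i)) := by
        refine Finset.sum_congr rfl fun k hk => Finset.sum_congr rfl fun l hl => ?_
        simp only [hterm k l (Finset.mem_range.mp hk) (Finset.mem_range.mp hl)]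
        split_ifs
        · rw [Finset.mul_sum]
        · simp
    _ = ∑ k : Fin n, ∑ l : Fin n, ∑ i, √(τ (k + 1)) * a (k + 1) i *
          (docEntry τ r k l * (√(τ (l + 1)) * b (l + 1) i)) := by
        rw [← Fin.sum_univ_eq_sum_range]
        refine Finset.sum_congr rfl fun k _ => ?_
        rw [← Fin.sum_univ_eq_sum_range]
    _ = ∑ i, scaledSeq τ n a i ⬝ᵥ (docMatrix τ r n *ᵥ scaledSeq τ n b i) := by
        simp only [dotProduct, mulVec, Finset.mul_sum]
        conv_rhs => rw [Finset.sum_comm]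
        refine Finset.sum_congr rfl fun k _ => ?_
        conv_rhs => rw [Finset.sum_comm]
        rfl

theorem sum_dotProduct_scaledSeq_le {ι : Type*} [Fintype ι] (τ : ℕ → ℝ) {n : ℕ}
    {a b : ℕ → ι → ℝ} (hab : ∀ k, 1 ≤ k → k ≤ n → ∑ i, a k i ^ 2 ≤ ∑ i, b k i ^ 2) :
    ∑ i, scaledSeq τ n a i ⬝ᵥ scaledSeq τ n a i ≤ ∑ i, scaledSeq τ n b i ⬝ᵥ scaledSeq τ n b i := by
  have hsq : ∀ c : ℕ → ι → ℝ, ∑ i, scaledSeq τ n c i ⬝ᵥ scaledSeq τ n c i =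
      ∑ k : Fin n, √(τ (k + 1)) ^ 2 * ∑ i, c (k + 1) i ^ 2 := fun c => by
    simp only [dotProduct, scaledSeq, Finset.mul_sum]
    rw [Finset.sum_comm]
    exact Finset.sum_congr rfl fun k _ => Finset.sum_congr rfl fun i _ => by ring
  rw [hsq, hsq]
  exact Finset.sum_le_sum fun k _ =>
    mul_le_mul_of_nonneg_left (hab _ (by omega) (by omega)) (sq_nonneg _)

theorem lamMin_Bt2_add_transpose_pos {r : ℕ → ℝ} {n : ℕ} [NeZero n]
    (hr4 : ∀ k, 1 ≤ k → k ≤ n + 1 → 0 ≤ r k ∧ r k < 4) :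
    0 < lamMin (Bt2 r n + (Bt2 r n)ᵀ) :=
  (isHermitian_add_transpose _).lamMin_pos_of_diag_dominant (Bt2_add_transpose_diag_dominant hr4)

theorem Mrq_pos {τ r : ℕ → ℝ} {n : ℕ} [NeZero n] (hτ : ∀ k, 1 ≤ k → k ≤ n → 0 < τ k)
    (hr4 : ∀ k, 1 ≤ k → k ≤ n + 1 → 0 ≤ r k ∧ r k < 4)
    (hr : ∀ k, 2 ≤ k → k ≤ n → r k = τ k / τ (k - 1)) : 0 < Mrq r n :=
  have hCA := docMatrix_mul_Bt2 hτ (fun k h1 _ => (hr4 k h1 (by omega)).1) hr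
  div_pos (lamMax_transpose_mul_self_pos hCA) (pow_pos (lamMin_Bt2_add_transpose_pos hr4) 2)

theorem sum_th_fvec_sub_le {τ r : ℕ → ℝ} {n : ℕ} [NeZero n]
    (hτ : ∀ k, 1 ≤ k → k ≤ n → 0 < τ k) (hr4 : ∀ k, 1 ≤ k → k ≤ n + 1 → 0 ≤ r k ∧ r k < 4)
    (hr : ∀ k, 2 ≤ k → k ≤ n → r k = τ k / τ (k - 1)) {ε M : ℝ} (hε : 0 < ε) (hM : Mrq r n ≤ M)
    (v z w : ℕ → Fin 2 → ℝ) :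
    ∑ k ∈ Icc 1 n, ∑ j ∈ Icc 1 k,
        th τ r k (k - j) * ∑ i, z k i * (fvec (v j + w j) i - fvec (v j) i) ≤
      ∑ k ∈ Icc 1 n, ∑ j ∈ Icc 1 k,
        th τ r k (k - j) * (ε * ∑ i, z k i * z j i + M / ε * ∑ i, w k i * w j i) := by
  have hCA := docMatrix_mul_Bt2 hτ (fun k h1 _ => (hr4 k h1 (by omega)).1) hr
  have hsplit : ∑ k ∈ Icc 1 n, ∑ j ∈ Icc 1 k,
      th τ r k (k - j) * (ε * ∑ i, z k i * z j i + M / ε * ∑ i, w k i * w j i) =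
      ε * ∑ k ∈ Icc 1 n, ∑ j ∈ Icc 1 k, th τ r k (k - j) * ∑ i, z k i * z j i +
        M / ε * ∑ k ∈ Icc 1 n, ∑ j ∈ Icc 1 k, th τ r k (k - j) * ∑ i, w k i * w j i := by
    rw [Finset.mul_sum, Finset.mul_sum, ← Finset.sum_add_distrib]
    refine Finset.sum_congr rfl fun k _ => ?_
    rw [Finset.mul_sum, Finset.mul_sum, ← Finset.sum_add_distrib]
    exact Finset.sum_congr rfl fun j _ => by ring
  rw [hsplit, sum_th_mul_eq_sum_dotProduct r hτ, sum_th_mul_eq_sum_dotProduct r hτ,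
    sum_th_mul_eq_sum_dotProduct r hτ]
  refine sum_dotProduct_mulVec_le_of_mul_eq_one hCA (lamMin_Bt2_add_transpose_pos hr4) hε hM _ _ _
    (sum_dotProduct_scaledSeq_le τ fun k _ _ => ?_)
  simpa using fvec_sub_sq_le (v k + w k) (v k)

theorem stmt10 (N : ℕ) (τ r : ℕ → ℝ)
    (hτ : ∀ k, 1 ≤ k → k ≤ N → 0 < τ k)
    (hr1 : r 1 = 0)
    (hr : ∀ k, 2 ≤ k → k ≤ N → r k = τ k / τ (k - 1))
    (hratio : ∀ k, 2 ≤ k → k ≤ N → 0 < r k ∧ r k < (3 + Real.sqrt 17) / 2)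
    (n : ℕ) (hn2 : 2 ≤ n) (hnN : n + 1 ≤ N)
    (Mr : ℝ)
    (hMr : Mr = (Finset.Icc 1 n).sup' (Finset.nonempty_Icc.mpr (le_trans one_le_two hn2)) (Mrq r))
    (v z w : ℕ → Fin 2 → ℝ) :
    (∀ ε : ℝ, 0 < ε →
      ∑ k ∈ Finset.Icc 1 n, ∑ j ∈ Finset.Icc 1 k,
          th τ r k (k - j) * ∑ i, z k i * (fvec (v j + w j) i - fvec (v j) i)
        ≤ ∑ k ∈ Finset.Icc 1 n, ∑ j ∈ Finset.Icc 1 k,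
            th τ r k (k - j) *
              (ε * ∑ i, z k i * z j i + (Mr / ε) * ∑ i, w k i * w j i)) ∧
    ∑ k ∈ Finset.Icc 1 n, ∑ j ∈ Finset.Icc 1 k,
        th τ r k (k - j) * ∑ i, z k i * (fvec (v j + z j) i - fvec (v j) i)
      ≤ 2 * Real.sqrt Mr * ∑ k ∈ Finset.Icc 1 n, ∑ j ∈ Finset.Icc 1 k,
          th τ r k (k - j) * ∑ i, z k i * z j i := by
  have : NeZero n := ⟨by omega⟩
  have hτn : ∀ k, 1 ≤ k → k ≤ n → 0 < τ k := fun k h1 h2 => hτ k h1 (by omega)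
  have hrn : ∀ k, 2 ≤ k → k ≤ n → r k = τ k / τ (k - 1) := fun k h1 h2 => hr k h1 (by omega)
  have hr4 : ∀ k, 1 ≤ k → k ≤ n + 1 → 0 ≤ r k ∧ r k < 4 := by
    intro k h1 h2
    rcases h1.eq_or_lt with rfl | h1
    · norm_num [hr1]
    · have h17 : √17 < 5 := by rw [Real.sqrt_lt' (by norm_num)]; norm_num
      obtain ⟨hpos, hlt⟩ := hratio k h1 (by omega)
      exact ⟨hpos.le, by linarith⟩
  have hMrq : Mrq r n ≤ Mr := hMr ▸ Finset.le_sup' (Mrq r) (Finset.mem_Icc.mpr ⟨by omega, le_rfl⟩)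
  have hMr_pos : 0 < Mr := (Mrq_pos hτn hr4 hrn).trans_le hMrq
  refine ⟨fun ε hε => sum_th_fvec_sub_le hτn hr4 hrn hε hMrq v z w, ?_⟩
  calc _ ≤ _ := sum_th_fvec_sub_le hτn hr4 hrn (Real.sqrt_pos.mpr hMr_pos) hMrq v z z
    _ = _ := by
      rw [Real.div_sqrt, Finset.mul_sum]
      refine Finset.sum_congr rfl fun k _ => ?_
      rw [Finset.mul_sum]
      exact Finset.sum_congr rfl fun j _ => by ring
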